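/- arXiv:0710.0177 — 7 statements merged into one kernel-verified Lean document; each statement's English description precedes it below -/
import Mathlib

section
/- For any f, g ∈ ℤ[x] with g ≠ 0, there exist unique integer-valued quasi-polynomials P and r such that f(n) = P(n)·g(n) + r(n) for all n ∈ ℕ, and 0 ≼ r ≺ |g|, where ≼ denotes the eventual pointwise order on integer-valued quasi-polynomials (h ≽ 0 iff h(n) ≥ 0 for all sufficiently large n) and |g| = g if g ≻ 0, |g| = −g if g ≺ 0. -/
open Filter

/-- A function `f : ℕ → ℤ` is an integer-valued quasi-polynomial if there exist a positive
integer `T` and polynomials `f₀, …, f_{T-1} ∈ ℤ[x]` with `f (T*m + i) = fᵢ(m)`. -/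
def IsQuasiPoly (f : ℕ → ℤ) : Prop :=
  ∃ T : ℕ, 0 < T ∧ ∃ p : ℕ → Polynomial ℤ,
    ∀ m i : ℕ, i < T → f (T * m + i) = (p i).eval (m : ℤ)

namespace GenEuclid

open Polynomial

lemma evPos (p : Polynomial ℤ) (hp : 0 < p.leadingCoeff) :
    ∀ᶠ n : ℕ in atTop, 0 < p.eval (n : ℤ) := by
  by_cases hd : 0 < p.degree
  · have hinj : Function.Injective (Int.castRingHom ℝ) := Int.cast_injective
    set q : Polynomial ℝ := p.map (Int.castRingHom ℝ) with hq
    have hdq : q.degree = p.degree := degree_map_eq_of_injective hinj p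
    have hlq : q.leadingCoeff = (p.leadingCoeff : ℝ) := by
      rw [hq, leadingCoeff, natDegree_map_eq_of_injective hinj, coeff_map]; rfl
    have ht : Tendsto (fun x : ℝ => q.eval x) atTop atTop :=
      q.tendsto_atTop_of_leadingCoeff_nonneg (hdq ▸ hd) (by rw [hlq]; exact_mod_cast hp.le)
    have ht2 : Tendsto (fun n : ℕ => q.eval (n : ℝ)) atTop atTop :=
      ht.comp tendsto_natCast_atTop_atTop
    filter_upwards [ht2.eventually_gt_atTop 0] with n hn
    have : q.eval ((n : ℤ) : ℝ) = ((p.eval (n : ℤ) : ℤ) : ℝ) := by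
      rw [hq, eval_map]
      simpa using eval₂_at_apply (p := p) (Int.castRingHom ℝ) ((n : ℤ))
    rw [show ((n : ℤ) : ℝ) = (n : ℝ) by push_cast; ring] at this
    have := this ▸ hn
    exact_mod_cast this
  · have : p = C (p.coeff 0) := eq_C_of_degree_le_zero (not_lt.mp hd)
    have hc : 0 < p.coeff 0 := by
      have : p.leadingCoeff = p.coeff 0 := by
        rw [leadingCoeff]; congr 1
        by_contra h
        exact hd (natDegree_pos_iff_degree_pos.mp (Nat.pos_of_ne_zero h))
      linarith [this ▸ hp]
    filter_upwards with n
    rw [this]; simpa using hc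

lemma pdiv (g : Polynomial ℤ) (hg : g ≠ 0) (f : Polynomial ℤ) :
    ∃ (e : ℕ) (Q R : Polynomial ℤ),
      C (g.leadingCoeff ^ e) * f = Q * g + R ∧ R.degree < g.degree := by
  generalize hN : f.natDegree = N
  induction N using Nat.strong_induction_on generalizing f with
  | _ N ih =>
    by_cases h : f.degree < g.degree
    · exact ⟨0, 0, f, by simp, h⟩
    push_neg at h
    have hf : f ≠ 0 := by
      rintro rfl
      rw [degree_zero, le_bot_iff, degree_eq_bot] at h
      exact hg h
    have hl0 : g.leadingCoeff ≠ 0 := leadingCoeff_ne_zero.mpr hg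
    have hfl0 : f.leadingCoeff ≠ 0 := leadingCoeff_ne_zero.mpr hf
    set l := g.leadingCoeff with hl
    set k := f.natDegree - g.natDegree with hk
    set f₁ := C l * f - C f.leadingCoeff * X ^ k * g with hf₁
    have hdk : k + g.natDegree = f.natDegree :=
      Nat.sub_add_cancel (natDegree_le_natDegree h)
    have hd1 : (C l * f).degree = f.degree := by
      rw [degree_mul, degree_C hl0, zero_add]
    have hd2 : (C f.leadingCoeff * X ^ k * g).degree = f.degree := by
      rw [degree_mul, degree_mul, degree_C hfl0, zero_add, degree_X_pow,
        degree_eq_natDegree hg, degree_eq_natDegree hf]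
      exact_mod_cast hdk
    have hlc : (C l * f).leadingCoeff = (C f.leadingCoeff * X ^ k * g).leadingCoeff := by
      rw [leadingCoeff_mul, leadingCoeff_mul, leadingCoeff_mul, leadingCoeff_C,
        leadingCoeff_C, leadingCoeff_X_pow]
      ring
    have hne : C l * f ≠ 0 := mul_ne_zero (by simpa using hl0) hf
    have hdeg : f₁.degree < f.degree := by
      rw [hf₁]
      calc (C l * f - C f.leadingCoeff * X ^ k * g).degree < (C l * f).degree :=
            degree_sub_lt (hd1.trans hd2.symm) hne hlc
        _ = f.degree := hd1
    have key : C l * f = C f.leadingCoeff * X ^ k * g + f₁ := by rw [hf₁]; ring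
    by_cases h0 : f₁ = 0
    · refine ⟨1, C f.leadingCoeff * X ^ k, 0, ?_, ?_⟩
      · rw [pow_one, key, h0, add_zero]
      · rw [degree_zero]
        exact bot_lt_iff_ne_bot.mpr (fun hb => hg (degree_eq_bot.mp hb))
    · have hlt : f₁.natDegree < N := hN ▸ natDegree_lt_natDegree h0 hdeg
      obtain ⟨e, Q, R, hQR, hR⟩ := ih f₁.natDegree hlt f₁ rfl
      refine ⟨e + 1, C (l ^ e) * (C f.leadingCoeff * X ^ k) + Q, R, ?_, hR⟩
      have hc : C (l ^ (e + 1)) = C (l ^ e) * C l := by rw [pow_succ, C_mul]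
      rw [hc]
      linear_combination C (l ^ e) * key + hQR

lemma quasi_sub {h₁ h₂ : ℕ → ℤ} (a : IsQuasiPoly h₁) (b : IsQuasiPoly h₂) :
    IsQuasiPoly (fun n => h₁ n - h₂ n) := by
  obtain ⟨T₁, hT₁, p, hp⟩ := a
  obtain ⟨T₂, hT₂, q, hq⟩ := b
  refine ⟨T₁ * T₂, Nat.mul_pos hT₁ hT₂, fun i =>
    (p (i % T₁)).comp (C ((i / T₁ : ℕ) : ℤ) + C (T₂ : ℤ) * X) -
    (q (i % T₂)).comp (C ((i / T₂ : ℕ) : ℤ) + C (T₁ : ℤ) * X), fun m i hi => ?_⟩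
  have e₁ : T₁ * T₂ * m + i = T₁ * (T₂ * m + i / T₁) + i % T₁ := by
    rw [Nat.mul_add, Nat.add_assoc, Nat.div_add_mod, Nat.mul_assoc]
  have e₂ : T₁ * T₂ * m + i = T₂ * (T₁ * m + i / T₂) + i % T₂ := by
    rw [Nat.mul_add, Nat.add_assoc, Nat.div_add_mod]; ring
  have v₁ := hp (T₂ * m + i / T₁) (i % T₁) (Nat.mod_lt _ hT₁)
  have v₂ := hq (T₁ * m + i / T₂) (i % T₂) (Nat.mod_lt _ hT₂)
  have w₁ : h₁ (T₁ * T₂ * m + i) = (p (i % T₁)).eval ((T₂ * m + i / T₁ : ℕ) : ℤ) := by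
    rw [e₁]; exact v₁
  have w₂ : h₂ (T₁ * T₂ * m + i) = (q (i % T₂)).eval ((T₁ * m + i / T₂ : ℕ) : ℤ) := by
    rw [e₂]; exact v₂
  have c₁ : ((T₂ * m + i / T₁ : ℕ) : ℤ) = ((i / T₁ : ℕ) : ℤ) + (T₂ : ℤ) * (m : ℤ) := by
    push_cast; ring
  have c₂ : ((T₁ * m + i / T₂ : ℕ) : ℤ) = ((i / T₂ : ℕ) : ℤ) + (T₁ : ℤ) * (m : ℤ) := by
    push_cast; ring
  simp only [eval_sub, eval_comp, eval_add, eval_mul, eval_C, eval_X]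
  rw [w₁, w₂, c₁, c₂]

lemma quasi_eventually_zero {h : ℕ → ℤ} (hq : IsQuasiPoly h)
    (he : ∀ᶠ n in atTop, h n = 0) : ∀ n, h n = 0 := by
  obtain ⟨T, hT, p, hp⟩ := hq
  obtain ⟨N, hN⟩ := eventually_atTop.mp he
  have hz : ∀ i < T, p i = 0 := by
    intro i hi
    apply eq_zero_of_infinite_isRoot
    apply Set.infinite_of_injective_forall_mem
      (f := fun t : ℕ => ((N + t : ℕ) : ℤ))
    · intro a b hab
      simpa using hab
    · intro t
      have h1 : T * (N + t) + i ≥ N := by nlinarith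
      have h2 := hp (N + t) i hi
      have h3 := hN _ h1
      rw [h3] at h2
      exact h2.symm
  intro n
  have := hp (n / T) (n % T) (Nat.mod_lt _ hT)
  rw [Nat.div_add_mod] at this
  rw [this, hz _ (Nat.mod_lt _ hT), eval_zero]

end GenEuclid

open GenEuclid Polynomial

set_option maxHeartbeats 1000000 in
/-- Generalized Euclidean division: for `f, g ∈ ℤ[x]` with `g ≠ 0` there exist unique
integer-valued quasi-polynomials `P` and `r` with `f(n) = P(n)·g(n) + r(n)` for all `n`,
`0 ≼ r` (i.e. `r n ≥ 0` for all sufficiently large `n`) and `r ≺ |g|` (i.e.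
`r n < |g(n)|` for all sufficiently large `n`). -/
theorem generalized_euclidean_division (f g : Polynomial ℤ) (hg : g ≠ 0) :
    ∃! Pr : (ℕ → ℤ) × (ℕ → ℤ),
      IsQuasiPoly Pr.1 ∧ IsQuasiPoly Pr.2 ∧
      (∀ n : ℕ, f.eval (n : ℤ) = Pr.1 n * g.eval (n : ℤ) + Pr.2 n) ∧
      (∀ᶠ n : ℕ in atTop, 0 ≤ Pr.2 n) ∧
      (∀ᶠ n : ℕ in atTop, Pr.2 n < |g.eval (n : ℤ)|) := by
  classical
  obtain ⟨e, Q₀, R₀, hQR₀, hRdeg₀⟩ := pdiv g hg f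
  set l := g.leadingCoeff with hl
  have hl0 : l ≠ 0 := leadingCoeff_ne_zero.mpr hg
  set M : ℤ := (l ^ e) ^ 2 with hMdef
  have hM0 : 0 < M := by positivity
  set Q : Polynomial ℤ := C (l ^ e) * Q₀ with hQdef
  set R : Polynomial ℤ := C (l ^ e) * R₀ with hRdef
  have hQR : C M * f = Q * g + R := by
    rw [hQdef, hRdef, hMdef, sq, C_mul]
    linear_combination C (l ^ e) * hQR₀
  have hRdeg : R.degree < g.degree := by
    have h1 : R.degree = R₀.degree := by
      rw [hRdef, degree_mul, degree_C (pow_ne_zero _ hl0), zero_add]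
    rw [h1]; exact hRdeg₀
  have hQRn : ∀ n : ℤ, M * f.eval n = Q.eval n * g.eval n + R.eval n := by
    intro n
    have := congrArg (eval n) hQR
    simpa using this
  set s : ℤ := if 0 < l then 1 else -1 with hs
  have hs1 : s = 1 ∨ s = -1 := by by_cases h : 0 < l <;> simp [hs, h]
  have hss : s * s = 1 := by rcases hs1 with h | h <;> rw [h] <;> ring
  have hsl : 0 < s * l := by
    rcases lt_trichotomy l 0 with h | h | h
    · rw [hs, if_neg (by linarith)]; linarith
    · exact absurd h hl0
    · rw [hs, if_pos h]; linarith
  have hs0 : s ≠ 0 := by rcases hs1 with h | h <;> rw [h] <;> norm_num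
  set T : ℕ := M.toNat with hT
  have hTM : (T : ℤ) = M := Int.toNat_of_nonneg hM0.le
  have hT0 : 0 < T := by
    have : (0 : ℤ) < (T : ℤ) := hTM ▸ hM0
    exact_mod_cast this
  set u : Polynomial ℤ := C s * Q with hu
  set kk : ℕ → ℤ := fun i => u.eval (i : ℤ) % M with hkk
  set cc : ℕ → ℤ := fun i => if R.leadingCoeff < 0 ∧ kk i = 0 then -1 else 0 with hcc
  have hdvd : ∀ i : ℕ, (C M : Polynomial ℤ) ∣
      u.comp (C (i : ℤ) + C M * X) - C (kk i) + C (M * cc i) := by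
    intro i
    have d1 : (C M : Polynomial ℤ) ∣ u.comp (C (i : ℤ) + C M * X) - C (u.eval (i : ℤ)) := by
      have h := sub_dvd_eval_sub (C (i : ℤ) + C M * X) (C (i : ℤ))
        (u.map (C : ℤ →+* Polynomial ℤ))
      rw [add_sub_cancel_left] at h
      have e1 : (u.map (C : ℤ →+* Polynomial ℤ)).eval (C (i : ℤ) + C M * X)
          = u.comp (C (i : ℤ) + C M * X) := by
        rw [eval_map]; rfl
      have e2 : (u.map (C : ℤ →+* Polynomial ℤ)).eval (C (i : ℤ)) = C (u.eval (i : ℤ)) := by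
        rw [eval_map, eval₂_at_apply]
      rw [e1, e2] at h
      exact dvd_trans (dvd_mul_right _ _) h
    have d2 : (C M : Polynomial ℤ) ∣ C (u.eval (i : ℤ)) - C (kk i) := by
      have h1 : u.eval (i : ℤ) - kk i = M * (u.eval (i : ℤ) / M) := by
        simp only [hkk]
        rw [Int.emod_def]; ring
      rw [← C_sub, h1, C_mul]
      exact dvd_mul_right _ _
    have d3 : (C M : Polynomial ℤ) ∣ C (M * cc i) := by
      rw [C_mul]; exact dvd_mul_right _ _
    have h4 : u.comp (C (i : ℤ) + C M * X) - C (kk i) + C (M * cc i)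
        = (u.comp (C (i : ℤ) + C M * X) - C (u.eval (i : ℤ)))
          + (C (u.eval (i : ℤ)) - C (kk i)) + C (M * cc i) := by ring
    rw [h4]
    exact dvd_add (dvd_add d1 d2) d3
  choose w hw using hdvd
  set P : ℕ → ℤ := fun n => s * (w (n % T)).eval ((n / T : ℕ) : ℤ) with hP
  set r : ℕ → ℤ := fun n => f.eval (n : ℤ) - P n * g.eval (n : ℤ) with hr
  have hwn : ∀ i m : ℕ, M * (w i).eval (m : ℤ)
      = u.eval ((i : ℤ) + M * (m : ℤ)) - kk i + M * cc i := by
    intro i m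
    have h := congrArg (eval (m : ℤ)) (hw i)
    simp only [eval_mul, eval_add, eval_sub, eval_C, eval_comp, eval_X] at h
    linear_combination -h
  have hdm : ∀ n : ℕ, (n : ℤ) = ((n % T : ℕ) : ℤ) + M * ((n / T : ℕ) : ℤ) := by
    intro n
    have h2 : (T : ℤ) * ((n / T : ℕ) : ℤ) + ((n % T : ℕ) : ℤ) = (n : ℤ) := by
      exact_mod_cast congrArg (Nat.cast : ℕ → ℤ) (Nat.div_add_mod n T)
    rw [← h2, hTM]; ring
  have hMPn : ∀ n : ℕ, M * P n = Q.eval (n : ℤ)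
      + s * (M * cc (n % T) - kk (n % T)) := by
    intro n
    have h1 := hwn (n % T) (n / T)
    rw [← hdm n] at h1
    have h2 : u.eval (n : ℤ) = s * Q.eval (n : ℤ) := by rw [hu, eval_mul, eval_C]
    simp only [hP]
    linear_combination s * h1 + s * h2 + Q.eval (n : ℤ) * hss
  have hkey : ∀ n : ℕ, M * r n = R.eval (n : ℤ)
      + (kk (n % T) - M * cc (n % T)) * (s * g.eval (n : ℤ)) := by
    intro n
    have h1 := hQRn (n : ℤ)
    have h2 := hMPn n
    simp only [hr]
    linear_combination h1 - g.eval (n : ℤ) * h2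
  have hmod : ∀ m i : ℕ, i < T → (T * m + i) % T = i ∧ (T * m + i) / T = m := by
    intro m i hi
    constructor
    · rw [Nat.mul_add_mod, Nat.mod_eq_of_lt hi]
    · rw [Nat.mul_add_div hT0, Nat.div_eq_of_lt hi, Nat.add_zero]
  have qP : IsQuasiPoly P := by
    refine ⟨T, hT0, fun i => C s * w i, fun m i hi => ?_⟩
    obtain ⟨h1, h2⟩ := hmod m i hi
    simp only [hP, h1, h2, eval_mul, eval_C]
  have qr : IsQuasiPoly r := by
    refine ⟨T, hT0, fun i => f.comp (C (i : ℤ) + C M * X)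
      - (C s * w i) * g.comp (C (i : ℤ) + C M * X), fun m i hi => ?_⟩
    obtain ⟨h1, h2⟩ := hmod m i hi
    have hn : ((T * m + i : ℕ) : ℤ) = (i : ℤ) + M * (m : ℤ) := by
      rw [← hTM]; push_cast; ring
    simp only [hr, hP, h1, h2, eval_sub, eval_mul, eval_comp, eval_add, eval_C, eval_X, hn]
  have heq : ∀ n : ℕ, f.eval (n : ℤ) = P n * g.eval (n : ℤ) + r n := by
    intro n; simp only [hr]; ring
  -- eventual positivity facts
  have hCsg_lc : (C s * g).leadingCoeff = s * l := by
    rw [leadingCoeff_mul, leadingCoeff_C, hl]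
  have hCsg_deg : (C s * g).degree = g.degree := by
    rw [degree_mul, degree_C hs0, zero_add]
  have E1 : ∀ᶠ n : ℕ in atTop, 0 < s * g.eval (n : ℤ) := by
    filter_upwards [evPos (C s * g) (hCsg_lc ▸ hsl)] with n hn
    simpa [eval_mul, eval_C] using hn
  have E2 : ∀ᶠ n : ℕ in atTop, |R.eval (n : ℤ)| < s * g.eval (n : ℤ) := by
    by_cases hR0 : R = 0
    · filter_upwards [E1] with n h
      rw [hR0]; simpa using h
    · have hdR : R.degree < (C s * g).degree := hCsg_deg ▸ hRdeg
      have hA : (C s * g - R).leadingCoeff = s * l := by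
        rw [sub_eq_add_neg, leadingCoeff_add_of_degree_lt' (by rwa [degree_neg]), hCsg_lc]
      have hB : (C s * g + R).leadingCoeff = s * l := by
        rw [leadingCoeff_add_of_degree_lt' hdR, hCsg_lc]
      filter_upwards [evPos _ (hA ▸ hsl), evPos _ (hB ▸ hsl)] with n h1 h2
      simp only [eval_sub, eval_add, eval_mul, eval_C] at h1 h2
      rw [abs_lt]; constructor <;> linarith
  have E3 : ∀ᶠ n : ℕ in atTop,
      (R.leadingCoeff < 0 → R.eval (n : ℤ) < 0) ∧
      (0 ≤ R.leadingCoeff → 0 ≤ R.eval (n : ℤ)) := by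
    rcases lt_trichotomy R.leadingCoeff 0 with h | h | h
    · filter_upwards [evPos (-R) (by rw [leadingCoeff_neg]; linarith)] with n hn
      rw [eval_neg] at hn
      exact ⟨fun _ => by linarith, fun h' => absurd h (not_lt.mpr h')⟩
    · have hz : R = 0 := leadingCoeff_eq_zero.mp h
      filter_upwards with n
      rw [hz]; simp
    · filter_upwards [evPos R h] with n hn
      exact ⟨fun h' => absurd h' (not_lt.mpr h.le), fun _ => hn.le⟩
  have Ebound : ∀ᶠ n : ℕ in atTop, 0 ≤ r n ∧ r n < |g.eval (n : ℤ)| := by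
    filter_upwards [E1, E2, E3] with n h1 h2 h3
    have hκ0 : 0 ≤ kk (n % T) := by
      simp only [hkk]; exact Int.emod_nonneg _ (ne_of_gt hM0)
    have hκM : kk (n % T) < M := by
      simp only [hkk]; exact Int.emod_lt_of_pos _ hM0
    have hM1 : (1 : ℤ) ≤ M := hM0
    have key := hkey n
    have hRub : R.eval (n : ℤ) < s * g.eval (n : ℤ) := (abs_lt.mp h2).2
    have hRlb : -(s * g.eval (n : ℤ)) < R.eval (n : ℤ) := (abs_lt.mp h2).1
    have habs : |g.eval (n : ℤ)| = s * g.eval (n : ℤ) := by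
      rcases hs1 with h | h
      · rw [h, one_mul] at h1 ⊢
        exact abs_of_pos h1
      · rw [h] at h1 ⊢
        have hneg : g.eval (n : ℤ) < 0 := by linarith
        rw [abs_of_neg hneg]; ring
    have hbounds : 0 ≤ M * r n ∧ M * r n < M * (s * g.eval (n : ℤ)) := by
      by_cases hcond : R.leadingCoeff < 0 ∧ kk (n % T) = 0
      · have hccv : cc (n % T) = -1 := by simp only [hcc]; exact if_pos hcond
        rw [hccv, hcond.2] at key
        have hRn : R.eval (n : ℤ) < 0 := h3.1 hcond.1
        constructor
        · nlinarith [mul_nonneg (sub_nonneg.mpr hM1) h1.le]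
        · nlinarith
      · have hccv : cc (n % T) = 0 := by simp only [hcc]; exact if_neg hcond
        rw [hccv, mul_zero, sub_zero] at key
        by_cases hk : kk (n % T) = 0
        · have hRnn : 0 ≤ R.eval (n : ℤ) :=
            h3.2 (not_lt.mp fun hl' => hcond ⟨hl', hk⟩)
          rw [hk] at key
          constructor
          · nlinarith
          · nlinarith [mul_nonneg (sub_nonneg.mpr hM1) h1.le]
        · have h1k : 1 ≤ kk (n % T) := by omega
          have hκM1 : kk (n % T) + 1 ≤ M := by omega
          constructor
          · nlinarith [mul_nonneg (by linarith : (0:ℤ) ≤ kk (n % T) - 1) h1.le]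
          · nlinarith [mul_nonneg (by linarith : (0:ℤ) ≤ M - 1 - kk (n % T)) h1.le]
    have h0r : 0 ≤ r n := by
      by_contra hneg
      push_neg at hneg
      nlinarith [hbounds.1]
    have hrB : r n < s * g.eval (n : ℤ) := lt_of_mul_lt_mul_left hbounds.2 hM0.le
    exact ⟨h0r, habs ▸ hrB⟩
  refine ⟨(P, r), ⟨qP, qr, heq, Ebound.mono fun n h => h.1,
    Ebound.mono fun n h => h.2⟩, ?_⟩
  rintro ⟨P', r'⟩ ⟨hqP', hqr', heq', hnn', hlt'⟩
  have hgne : ∀ᶠ n : ℕ in atTop, g.eval (n : ℤ) ≠ 0 := by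
    filter_upwards [E1] with n h1
    intro h0
    rw [h0, mul_zero] at h1
    exact lt_irrefl _ h1
  have hre : ∀ᶠ n : ℕ in atTop, r' n - r n = 0 := by
    filter_upwards [Ebound, hnn', hlt'] with n h1 h2 h3
    have hdvd2 : g.eval (n : ℤ) ∣ r n - r' n :=
      ⟨P' n - P n, by linear_combination (heq' n) - (heq n)⟩
    have habs2 : |r n - r' n| < |g.eval (n : ℤ)| := by
      rw [abs_lt]
      constructor
      · linarith [h1.1, h3]
      · linarith [h1.2, h2]
    have := Int.eq_zero_of_abs_lt_dvd ((abs_dvd _ _).mpr hdvd2) habs2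
    linarith
  have hr'' : ∀ n, r' n = r n := by
    have hz := quasi_eventually_zero (quasi_sub hqr' qr) hre
    intro n
    have := hz n
    simp only at this
    linarith
  have hPe : ∀ᶠ n : ℕ in atTop, P' n - P n = 0 := by
    filter_upwards [hgne] with n hgn
    have h4 : (P' n - P n) * g.eval (n : ℤ) = 0 := by
      linear_combination heq n - heq' n - hr'' n
    rcases mul_eq_zero.mp h4 with h | h
    · exact h
    · exact absurd h hgn
  have hP'' : ∀ n, P' n = P n := by
    have hz := quasi_eventually_zero (quasi_sub hqP' qP) hPe
    intro n
    have := hz n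
    simp only at this
    linarith
  exact Prod.ext (funext hP'') (funext hr'')
end

section
/- Let f, g ∈ ℤ[x] with g(n) ≠ 0 for all n ∈ ℕ, and let r be the remainder of the generalized Euclidean division of f by g (so f = P·g + r pointwise with 0 ≼ r ≺ |g|). Then r = 0 as an integer-valued quasi-polynomial if and only if g(n) divides f(n) in ℤ for every n ∈ ℕ. -/
open Filter

/-- Let `f, g ∈ ℤ[x]` with `g(n) ≠ 0` for all `n ∈ ℕ`, and let `P, r` be the quotient and
remainder of the generalized Euclidean division of `f` by `g`, i.e. integer-valued
quasi-polynomials with `f(n) = P(n)·g(n) + r(n)` for all `n` and `0 ≼ r ≺ |g|`.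
Then `r = 0` (as an integer-valued quasi-polynomial) iff `g(n) ∣ f(n)` for every `n ∈ ℕ`. -/
theorem rem_eq_zero_iff_dvd (f g : Polynomial ℤ) (hg : ∀ n : ℕ, g.eval (n : ℤ) ≠ 0)
    (P r : ℕ → ℤ) (hP : IsQuasiPoly P) (hr : IsQuasiPoly r)
    (hdiv : ∀ n : ℕ, f.eval (n : ℤ) = P n * g.eval (n : ℤ) + r n)
    (hnonneg : ∀ᶠ n : ℕ in atTop, 0 ≤ r n)
    (hlt : ∀ᶠ n : ℕ in atTop, r n < |g.eval (n : ℤ)|) :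
    (∀ n : ℕ, r n = 0) ↔ (∀ n : ℕ, g.eval (n : ℤ) ∣ f.eval (n : ℤ)) := by
  constructor
  · intro h n
    rw [hdiv n, h n, add_zero]
    exact Dvd.intro_left _ rfl
  · intro h
    -- eventually r n = 0
    have hev : ∀ᶠ n : ℕ in atTop, r n = 0 := by
      filter_upwards [hnonneg, hlt] with n h0 h1
      have hdvd : g.eval (n : ℤ) ∣ r n := by
        have := h n
        rw [hdiv n] at this
        exact (dvd_add_right (Dvd.intro_left _ rfl)).mp this
      by_contra hne
      have habs : |g.eval (n : ℤ)| ≤ r n :=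
        Int.le_of_dvd (lt_of_le_of_ne h0 (Ne.symm hne)) ((abs_dvd _ _).mpr hdvd)
      exact absurd h1 (not_lt.mpr habs)
    obtain ⟨T, hT, p, hp⟩ := hr
    obtain ⟨N, hN⟩ := eventually_atTop.mp hev
    -- each p i is zero
    have hpz : ∀ i, i < T → p i = 0 := by
      intro i hi
      apply Polynomial.eq_zero_of_infinite_isRoot
      apply Set.Infinite.mono (s := (fun m : ℕ => (m : ℤ)) '' Set.Ici N)
      · rintro x ⟨m, hm, rfl⟩
        simp only [Set.mem_setOf_eq, Polynomial.IsRoot]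
        rw [← hp m i hi]
        exact hN (T * m + i) (le_trans hm (le_trans (Nat.le_mul_of_pos_left m hT) (Nat.le_add_right _ _)))
      · exact Set.Infinite.image (fun a _ b _ h => Nat.cast_injective h) (Set.Ici_infinite N)
    intro n
    have hn : n = T * (n / T) + n % T := (Nat.div_add_mod n T).symm
    rw [hn, hp (n / T) (n % T) (Nat.mod_lt n hT), hpz (n % T) (Nat.mod_lt n hT)]
    simp
end

section
/- Let f, g be integer-valued quasi-polynomials such that g(n) ≠ 0 for all n ∈ ℕ, f(n) divides g(n) for all n, and g(n) divides f(n) for all n. Then f = ε·g where ε is an invertible element of the ring of integer-valued quasi-polynomials, i.e., ε(n) ∈ {1, −1} for each n and ε is a quasi-polynomial. -/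
/-- If `f, g` are integer-valued quasi-polynomials with `g` nowhere zero such that
`f(n) ∣ g(n)` and `g(n) ∣ f(n)` for every `n`, then `f = ε·g` for an invertible
element `ε` of the ring of integer-valued quasi-polynomials, i.e. a quasi-polynomial
taking only the values `1` and `−1`. -/
theorem mutual_dvd_unit (f g : ℕ → ℤ) (hf : IsQuasiPoly f) (hg : IsQuasiPoly g)
    (hg0 : ∀ n : ℕ, g n ≠ 0)
    (hfg : ∀ n : ℕ, f n ∣ g n) (hgf : ∀ n : ℕ, g n ∣ f n) :
    ∃ ε : ℕ → ℤ, IsQuasiPoly ε ∧ (∀ n : ℕ, ε n = 1 ∨ ε n = -1) ∧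
      ∀ n : ℕ, f n = ε n * g n := by
  obtain ⟨Tf, hTf, pf, hpf⟩ := hf
  obtain ⟨Tg, hTg, pg, hpg⟩ := hg
  set T := Tf * Tg with hT
  have hTpos : 0 < T := Nat.mul_pos hTf hTg
  -- squares agree pointwise
  have hsq : ∀ n, f n ^ 2 = g n ^ 2 := by
    intro n
    have h1 : (f n).natAbs ∣ (g n).natAbs := Int.natAbs_dvd_natAbs.2 (hfg n)
    have h2 : (g n).natAbs ∣ (f n).natAbs := Int.natAbs_dvd_natAbs.2 (hgf n)
    have h3 : (f n).natAbs = (g n).natAbs := Nat.dvd_antisymm h1 h2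
    have := congrArg (fun k : ℕ => (k : ℤ) ^ 2) h3
    simpa [Int.natAbs_sq, sq_abs] using this
  -- polynomials representing f and g on residue classes mod T
  set P : ℕ → Polynomial ℤ := fun i =>
    (pf (i % Tf)).comp (Polynomial.C (Tg : ℤ) * Polynomial.X + Polynomial.C ((i / Tf : ℕ) : ℤ))
    with hP
  set Q : ℕ → Polynomial ℤ := fun i =>
    (pg (i % Tg)).comp (Polynomial.C (Tf : ℤ) * Polynomial.X + Polynomial.C ((i / Tg : ℕ) : ℤ))
    with hQ
  have hPe : ∀ m i : ℕ, f (T * m + i) = (P i).eval (m : ℤ) := by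
    intro m i
    have harg : T * m + i = Tf * (Tg * m + i / Tf) + i % Tf := by
      rw [Nat.mul_add, ← Nat.mul_assoc, Nat.add_assoc, Nat.div_add_mod]
    rw [harg, hpf (Tg * m + i / Tf) (i % Tf) (Nat.mod_lt _ hTf)]
    simp [hP, Polynomial.eval_comp]
  have hQe : ∀ m i : ℕ, g (T * m + i) = (Q i).eval (m : ℤ) := by
    intro m i
    have harg : T * m + i = Tg * (Tf * m + i / Tg) + i % Tg := by
      rw [Nat.mul_add, hT, Nat.mul_comm Tf Tg, ← Nat.mul_assoc, Nat.add_assoc, Nat.div_add_mod]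
    rw [harg, hpg (Tf * m + i / Tg) (i % Tg) (Nat.mod_lt _ hTg)]
    simp [hQ, Polynomial.eval_comp]
  -- on each class, P i = Q i or P i = -Q i
  have hkey : ∀ i : ℕ, P i = Q i ∨ P i = -Q i := by
    intro i
    have hsqpoly : (P i) ^ 2 = (Q i) ^ 2 := by
      apply Polynomial.eq_of_infinite_eval_eq
      apply Set.Infinite.mono (s := Set.range (fun m : ℕ => (m : ℤ)))
      · rintro x ⟨m, rfl⟩
        simp only [Set.mem_setOf_eq, Polynomial.eval_pow]
        rw [← hPe m i, ← hQe m i]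
        exact hsq _
      · exact Set.infinite_range_of_injective (fun a b h => by exact_mod_cast h)
    have : (P i - Q i) * (P i + Q i) = 0 := by linear_combination hsqpoly
    rcases mul_eq_zero.1 this with h | h
    · left; exact sub_eq_zero.1 h
    · right; exact eq_neg_of_add_eq_zero_left h
  refine ⟨fun n => if P (n % T) = Q (n % T) then 1 else -1, ?_, ?_, ?_⟩
  · refine ⟨T, hTpos, fun i => Polynomial.C (if P i = Q i then 1 else -1), ?_⟩
    intro m i hi
    have : (T * m + i) % T = i := by
      rw [Nat.mul_add_mod, Nat.mod_eq_of_lt hi]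
    simp only [this]
    split <;> simp
  · intro n
    by_cases h : P (n % T) = Q (n % T) <;> simp [h]
  · intro n
    have hn : T * (n / T) + n % T = n := Nat.div_add_mod n T
    have hfn : f n = (P (n % T)).eval ((n / T : ℕ) : ℤ) := by
      have := hPe (n / T) (n % T); rwa [hn] at this
    have hgn : g n = (Q (n % T)).eval ((n / T : ℕ) : ℤ) := by
      have := hQe (n / T) (n % T); rwa [hn] at this
    by_cases h : P (n % T) = Q (n % T)
    · simp only [h, if_pos, one_mul]
      rw [hfn, hgn, h]
    · rcases hkey (n % T) with h' | h'
      · exact absurd h' h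
      · simp only [h, if_neg, not_false_iff, neg_one_mul]
        rw [hfn, hgn, h']
        simp
end

section
/- Let f : ℕ → ℚ be a quasi-rational function, i.e., there exist a positive integer T and rational functions f_i/g_i with f_i, g_i ∈ ℤ[x] such that f(Tm+i) = f_i(m)/g_i(m) for all m ∈ ℕ and 0 ≤ i < T. If f(n) ∈ ℤ for every n ∈ ℕ, then f is an integer-valued quasi-polynomial. -/
/-- A function `f : ℕ → ℚ` is quasi-rational if there exist a positive integer `T` and
rational functions `fᵢ/gᵢ` with `fᵢ, gᵢ ∈ ℤ[x]` (denominators nonvanishing on ℕ) such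
that `f (T*m + i) = fᵢ(m)/gᵢ(m)`. -/
def IsQuasiRational (f : ℕ → ℚ) : Prop :=
  ∃ T : ℕ, 0 < T ∧ ∃ p q : ℕ → Polynomial ℤ,
    ∀ m i : ℕ, i < T →
      (q i).eval (m : ℤ) ≠ 0 ∧
      f (T * m + i) = (((p i).eval (m : ℤ) : ℤ) : ℚ) / (((q i).eval (m : ℤ) : ℤ) : ℚ)

/-! On each residue class, `m ↦ p(m)/q(m)` with `q(m) ∣ p(m)` for every `m ∈ ℕ`. Dividing with
remainder over `ℚ` and clearing denominators gives `b • p = q * D + R` over `ℤ` with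
`deg R < deg q`; then `q(m) ∣ R(m)` while `|R(m)| < |q(m)|` for large `m`, so `R = 0` and the
piece is a polynomial `h ∈ ℚ[X]`. If `N • h ∈ ℤ[X]` and `h(s) ∈ ℤ`, then `h(N X + s) ∈ ℤ[X]`,
since `N X` divides `(N • h)(N X + s) - (N • h)(s)`; so refining the period `T` to `T N`, with
`N` a common denominator of the pieces, makes every piece an integer polynomial. -/

open Polynomial

theorem Polynomial.exists_nat_map_eq_C_mul {ι : Type*} (s : Finset ι) (h : ι → ℚ[X]) :
    ∃ N : ℕ, 0 < N ∧ ∀ i ∈ s, ∃ H : ℤ[X], H.map (Int.castRingHom ℚ) = C (N : ℚ) * h i := by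
  choose b hb hH using fun i => IsLocalization.integerNormalization_spec (nonZeroDivisors ℤ) (h i)
  refine ⟨∏ i ∈ s, (b i).natAbs,
    Finset.prod_pos fun i _ => Int.natAbs_pos.2 (nonZeroDivisors.ne_zero (hb i)), fun i hi => ?_⟩
  obtain ⟨c, hc⟩ := Finset.dvd_prod_of_mem (fun i => (b i).natAbs) hi
  refine ⟨C (c * (b i).sign) * IsLocalization.integerNormalization (nonZeroDivisors ℤ) (h i), ?_⟩
  rw [Polynomial.map_mul, ← algebraMap_int_eq, hH, map_C, zsmul_eq_mul, ← C_eq_intCast, hc,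
    ← mul_assoc, ← C_mul]
  congr 2
  rw [algebraMap_int_eq, eq_intCast, Int.cast_mul, mul_assoc, ← Int.cast_mul,
    Int.sign_mul_self_eq_abs, Nat.cast_mul, Nat.cast_natAbs, Int.cast_natCast, mul_comm]

theorem Polynomial.exists_map_eq_comp_C_mul_X_add_C {h : ℚ[X]} {N : ℤ} (hN : N ≠ 0) {H : ℤ[X]}
    (hH : H.map (Int.castRingHom ℚ) = C (N : ℚ) * h) {s z : ℤ} (hz : h.eval (s : ℚ) = z) :
    ∃ P : ℤ[X], P.map (Int.castRingHom ℚ) = h.comp (C (N : ℚ) * X + C (s : ℚ)) := by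
  obtain ⟨B, hB⟩ : C N * X ∣ H.comp (C N * X + C s) - C (H.eval s) := by
    have := sub_dvd_eval_sub (C N * X + C s) (C s) (H.map C)
    rwa [add_sub_cancel_right, eval_map, eval_map, ← comp, ← comp, comp_C] at this
  have hHs : ((H.eval s : ℤ) : ℚ) = N * z := by
    simpa [eval_intCast_map, hz] using congrArg (eval (s : ℚ)) hH
  refine ⟨C z + X * B, mul_left_cancel₀ (C_ne_zero.2 (Int.cast_ne_zero.2 hN)) ?_⟩
  have hBmap := congrArg (map (Int.castRingHom ℚ)) hB
  simp only [Polynomial.map_sub, Polynomial.map_mul, map_comp, map_C, map_X, Polynomial.map_add,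
    hH, Int.coe_castRingHom, hHs, mul_comp, C_comp] at hBmap ⊢
  rw [C_mul] at hBmap
  linear_combination -hBmap

theorem Polynomial.map_dvd_map_of_infinite_eval_dvd_eval {P Q : ℤ[X]} (hQ : Q ≠ 0)
    (h : {a | Q.eval a ∣ P.eval a}.Infinite) :
    Q.map (Int.castRingHom ℚ) ∣ P.map (Int.castRingHom ℚ) := by
  set P' := P.map (Int.castRingHom ℚ)
  set Q' := Q.map (Int.castRingHom ℚ)
  obtain ⟨b, hb, D, hD⟩ :
      ∃ b ∈ nonZeroDivisors ℤ, ∃ D : ℤ[X], D.map (Int.castRingHom ℚ) = C (b : ℚ) * (P' / Q') := by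
    obtain ⟨b, hb, hD⟩ := IsLocalization.integerNormalization_spec (nonZeroDivisors ℤ) (P' / Q')
    exact ⟨b, hb, _, by rw [← algebraMap_int_eq, hD, zsmul_eq_mul, C_eq_intCast]⟩
  have hb0 : (b : ℚ) ≠ 0 := by simpa using nonZeroDivisors.ne_zero hb
  set R := C b * P - Q * D
  have hRmap : R.map (Int.castRingHom ℚ) = C (b : ℚ) * (P' % Q') := by
    have := EuclideanDomain.div_add_mod P' Q'
    simp only [R, Polynomial.map_sub, Polynomial.map_mul, map_C, hD, Int.coe_castRingHom]
    linear_combination (-C (b : ℚ)) * this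
  have hdeg : R.degree < Q.degree := by
    have hinj := RingHom.injective_int (Int.castRingHom ℚ)
    rw [← degree_map_eq_of_injective hinj, hRmap, degree_C_mul hb0,
      ← degree_map_eq_of_injective hinj Q]
    exact EuclideanDomain.mod_lt P' ((Polynomial.map_ne_zero_iff hinj).2 hQ)
  have hR : R = 0 := by
    refine eq_zero_of_infinite_isRoot R ((h.sdiff (finite_abs_eval_le_of_degree_lt hdeg)).mono ?_)
    rintro x ⟨hdvd, hlt⟩
    simp only [Set.mem_ofPred_eq, not_le] at hdvd hlt
    refine Int.eq_zero_of_abs_lt_dvd ?_ hlt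
    simpa [R] using (hdvd.mul_left b).sub (dvd_mul_right _ (D.eval x))
  rw [hR, Polynomial.map_zero, zero_eq_mul, or_iff_right (C_ne_zero.2 hb0)] at hRmap
  exact EuclideanDomain.mod_eq_zero.1 hRmap

theorem exists_eval_eq_of_forall_intCast_eq_div {p q : ℤ[X]} {g : ℕ → ℤ}
    (hq : ∀ m : ℕ, q.eval (m : ℤ) ≠ 0)
    (hg : ∀ m : ℕ, (g m : ℚ) = ((p.eval (m : ℤ) : ℤ) : ℚ) / ((q.eval (m : ℤ) : ℤ) : ℚ)) :
    ∃ h : ℚ[X], ∀ m : ℕ, (g m : ℚ) = h.eval (m : ℚ) := by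
  have hdvd : {a | q.eval a ∣ p.eval a}.Infinite := by
    refine Set.infinite_of_injective_forall_mem Nat.cast_injective fun m => ⟨g m, ?_⟩
    exact_mod_cast ((eq_div_iff (by exact_mod_cast hq m)).1 (hg m)).symm.trans (mul_comm _ _)
  obtain ⟨h, hh⟩ := map_dvd_map_of_infinite_eval_dvd_eval (fun h0 => hq 0 (by simp [h0])) hdvd
  refine ⟨h, fun m => ?_⟩
  rw [hg, div_eq_iff (by exact_mod_cast hq m), mul_comm]
  simpa [eval_natCast_map] using congrArg (eval (m : ℚ)) hh

theorem isQuasiPoly_of_forall_exists_eval_eq {F : ℕ → ℤ} {T : ℕ} (hT : 0 < T)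
    (hF : ∀ i < T, ∃ h : ℚ[X], ∀ m : ℕ, (F (T * m + i) : ℚ) = h.eval (m : ℚ)) :
    IsQuasiPoly F := by
  choose! h hh using hF
  obtain ⟨N, hN, hH⟩ := exists_nat_map_eq_C_mul (Finset.range T) h
  choose! H hH using hH
  have hP : ∀ r, ∃ P : ℤ[X],
      P.map (Int.castRingHom ℚ) = (h (r % T)).comp (C (N : ℚ) * X + C ((r / T : ℕ) : ℚ)) := by
    intro r
    have hr := Nat.mod_lt r hT
    obtain ⟨P, hP⟩ := exists_map_eq_comp_C_mul_X_add_C (N := N) (Int.natCast_ne_zero.2 hN.ne')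
      (by rw [hH _ (Finset.mem_range.2 hr), Int.cast_natCast]) (s := (r / T : ℕ))
      (z := F (T * (r / T) + r % T)) (by rw [Int.cast_natCast, hh _ hr])
    exact ⟨P, by rw [hP, Int.cast_natCast, Int.cast_natCast]⟩
  choose P hP using hP
  refine ⟨T * N, Nat.mul_pos hT hN, P, fun m r hr => Int.cast_injective (α := ℚ) ?_⟩
  calc (F (T * N * m + r) : ℚ) = F (T * (N * m + r / T) + r % T) := by
        rw [mul_add, add_assoc, Nat.div_add_mod, mul_assoc]
    _ = (h (r % T)).eval ((N * m + r / T : ℕ) : ℚ) := hh _ (Nat.mod_lt r hT) _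
    _ = (P r).eval (m : ℤ) := by
        have := congrArg (eval (m : ℚ)) (hP r)
        rw [eval_natCast_map, eval_comp] at this
        simpa using this.symm

/-- If a quasi-rational function `f : ℕ → ℚ` takes integer values at every `n ∈ ℕ`,
then `f` is an integer-valued quasi-polynomial. -/
theorem quasiRational_integer_valued (f : ℕ → ℚ) (hf : IsQuasiRational f)
    (hint : ∀ n : ℕ, ∃ z : ℤ, f n = (z : ℚ)) :
    ∃ F : ℕ → ℤ, IsQuasiPoly F ∧ ∀ n : ℕ, f n = (F n : ℚ) := by
  obtain ⟨T, hT, p, q, hpq⟩ := hf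
  choose F hF using hint
  refine ⟨F, isQuasiPoly_of_forall_exists_eval_eq hT fun i hi => ?_, hF⟩
  refine exists_eval_eq_of_forall_intCast_eq_div (p := p i) (q := q i)
    (fun m => (hpq m i hi).1) fun m => ?_
  rw [← hF, (hpq m i hi).2]
end

section
/- For any integer-valued quasi-polynomials f_1, ..., f_s, there exist integer-valued quasi-polynomials d, u_1, ..., u_s such that d is a greatest common divisor of f_1, ..., f_s (d divides each f_k pointwise, and every common pointwise divisor in R divides d) and f_1·u_1 + f_2·u_2 + ... + f_s·u_s = d as functions on ℕ. -/
open Polynomial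

def HasQuasiPeriod (f : ℕ → ℤ) (T : ℕ) : Prop :=
  ∃ p : ℕ → ℤ[X], ∀ m i : ℕ, i < T → f (T * m + i) = (p i).eval (m : ℤ)

namespace HasQuasiPeriod

variable {f g : ℕ → ℤ} {T : ℕ}

theorem mul_right (h : HasQuasiPeriod f T) (k : ℕ) : HasQuasiPeriod f (T * k) := by
  obtain ⟨p, hp⟩ := h
  refine ⟨fun i => (p (i % T)).comp (C (k : ℤ) * X + C ((i / T : ℕ) : ℤ)), fun m i hi => ?_⟩
  have hT : 0 < T := Nat.pos_of_mul_pos_right (Nat.zero_lt_of_lt hi)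
  have hsplit : T * k * m + i = T * (k * m + i / T) + i % T := by
    rw [mul_add, add_assoc, Nat.div_add_mod, mul_assoc]
  rw [hsplit, hp _ _ (Nat.mod_lt i hT)]
  simp

theorem of_dvd (h : HasQuasiPeriod f T) {S : ℕ} (hTS : T ∣ S) : HasQuasiPeriod f S := by
  obtain ⟨k, rfl⟩ := hTS
  exact h.mul_right k

theorem add (hf : HasQuasiPeriod f T) (hg : HasQuasiPeriod g T) :
    HasQuasiPeriod (fun n => f n + g n) T := by
  obtain ⟨p, hp⟩ := hf
  obtain ⟨q, hq⟩ := hg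
  exact ⟨p + q, fun m i hi => by simp [hp m i hi, hq m i hi]⟩

theorem sub (hf : HasQuasiPeriod f T) (hg : HasQuasiPeriod g T) :
    HasQuasiPeriod (fun n => f n - g n) T := by
  obtain ⟨p, hp⟩ := hf
  obtain ⟨q, hq⟩ := hg
  exact ⟨p - q, fun m i hi => by simp [hp m i hi, hq m i hi]⟩

theorem mul (hf : HasQuasiPeriod f T) (hg : HasQuasiPeriod g T) :
    HasQuasiPeriod (fun n => f n * g n) T := by
  obtain ⟨p, hp⟩ := hf
  obtain ⟨q, hq⟩ := hg
  exact ⟨p * q, fun m i hi => by simp [hp m i hi, hq m i hi]⟩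

end HasQuasiPeriod

theorem isQuasiPoly_const (a : ℤ) : IsQuasiPoly fun _ => a :=
  ⟨1, one_pos, fun _ => C a, fun _ _ _ => by simp⟩

theorem isQuasiPoly_eval (P : ℤ[X]) : IsQuasiPoly fun n => P.eval (n : ℤ) :=
  ⟨1, one_pos, fun _ => P, fun m i hi => by simp [Nat.lt_one_iff.1 hi]⟩

theorem isQuasiPoly_glue {T : ℕ} (hT : 0 < T) {g : ℕ → ℕ → ℤ} (hg : ∀ i < T, IsQuasiPoly (g i)) :
    IsQuasiPoly fun n => g (n % T) (n / T) := by
  choose! S hS hper using hg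
  set L := ∏ i ∈ Finset.range T, S i
  have hL : 0 < L := Finset.prod_pos fun i hi => hS i (Finset.mem_range.1 hi)
  have hperL : ∀ i < T, HasQuasiPeriod (g i) L := fun i hi =>
    HasQuasiPeriod.of_dvd (hper i hi) (Finset.dvd_prod_of_mem S (Finset.mem_range.2 hi))
  choose! p hp using hperL
  refine ⟨T * L, Nat.mul_pos hT hL, fun l => p (l % T) (l / T), fun m l hl => ?_⟩
  have hmod : (T * L * m + l) % T = l % T := by rw [mul_assoc, Nat.mul_add_mod]
  have hdiv : (T * L * m + l) / T = L * m + l / T := by rw [mul_assoc, Nat.mul_add_div hT]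
  simp only [hmod, hdiv]
  exact hp _ (Nat.mod_lt l hT) m _ (Nat.div_lt_of_lt_mul hl)

theorem isQuasiPoly_mod {T : ℕ} (hT : 0 < T) (h : ℕ → ℤ) : IsQuasiPoly fun n => h (n % T) :=
  isQuasiPoly_glue (g := fun i _ => h i) hT fun i _ => isQuasiPoly_const (h i)

theorem Polynomial.C_mul_X_dvd_comp_sub {R : Type*} [CommRing R] (p : R[X]) (a b : R) :
    C a * X ∣ p.comp (C a * X + C b) - C (p.eval b) := by
  have h := sub_dvd_eval_sub (C a * X + C b) (C b) (p.map C)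
  rwa [eval_map, eval_map, eval₂_at_apply, add_sub_cancel_right] at h

theorem isQuasiPoly_eval_ediv (P : ℤ[X]) (N : ℤ) : IsQuasiPoly fun n => P.eval (n : ℤ) / N := by
  rcases eq_or_ne N 0 with rfl | hN
  · simpa using isQuasiPoly_const 0
  have hdvd : ∀ j : ℕ, ∃ S : ℤ[X],
      P.comp (C (N.natAbs : ℤ) * X + C (j : ℤ)) - C (P.eval (j : ℤ)) = C N * S := fun j =>
    ((map_dvd C (Int.dvd_natAbs.2 dvd_rfl)).trans (dvd_mul_right _ X)).trans
      (P.C_mul_X_dvd_comp_sub _ _)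
  choose S hS using hdvd
  -- `P (|N| m + j) = P j + N * S j m`, so `P (|N| m + j) / N = P j / N + S j m` with no
  -- divisibility assumption.
  refine ⟨N.natAbs, Int.natAbs_pos.2 hN, fun j => C (P.eval (j : ℤ) / N) + S j, fun m j _ => ?_⟩
  have h := congrArg (eval (m : ℤ)) (hS j)
  simp only [eval_sub, eval_comp, eval_add, eval_mul, eval_C, eval_X] at h
  rw [eval_add, eval_C, ← Int.add_mul_ediv_left _ _ hN, ← h, add_sub_cancel]
  push_cast
  rfl

namespace IsQuasiPoly

variable {f g : ℕ → ℤ}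

theorem exists_common_period (hf : IsQuasiPoly f) (hg : IsQuasiPoly g) :
    ∃ T, 0 < T ∧ HasQuasiPeriod f T ∧ HasQuasiPeriod g T := by
  obtain ⟨T, hT, hfT⟩ := hf
  obtain ⟨S, hS, hgS⟩ := hg
  exact ⟨T * S, Nat.mul_pos hT hS, HasQuasiPeriod.of_dvd hfT (dvd_mul_right T S),
    HasQuasiPeriod.of_dvd hgS (dvd_mul_left S T)⟩

theorem add (hf : IsQuasiPoly f) (hg : IsQuasiPoly g) : IsQuasiPoly fun n => f n + g n := by
  obtain ⟨T, hT, hfT, hgT⟩ := hf.exists_common_period hg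
  exact ⟨T, hT, hfT.add hgT⟩

theorem sub (hf : IsQuasiPoly f) (hg : IsQuasiPoly g) : IsQuasiPoly fun n => f n - g n := by
  obtain ⟨T, hT, hfT, hgT⟩ := hf.exists_common_period hg
  exact ⟨T, hT, hfT.sub hgT⟩

theorem mul (hf : IsQuasiPoly f) (hg : IsQuasiPoly g) : IsQuasiPoly fun n => f n * g n := by
  obtain ⟨T, hT, hfT, hgT⟩ := hf.exists_common_period hg
  exact ⟨T, hT, hfT.mul hgT⟩

theorem ediv (hf : IsQuasiPoly f) (N : ℤ) : IsQuasiPoly fun n => f n / N := by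
  obtain ⟨T, hT, p, hp⟩ := hf
  have hfn : ∀ n, f n = (p (n % T)).eval ((n / T : ℕ) : ℤ) := fun n => by
    rw [← hp _ _ (Nat.mod_lt n hT), Nat.div_add_mod]
  simp only [hfn]
  exact isQuasiPoly_glue (g := fun i m => (p i).eval (m : ℤ) / N) hT
    fun i _ => isQuasiPoly_eval_ediv (p i) N

end IsQuasiPoly

def HasQuasiPolyBezout (a b : ℕ → ℤ) : Prop :=
  ∃ d u v : ℕ → ℤ, IsQuasiPoly d ∧ IsQuasiPoly u ∧ IsQuasiPoly v ∧
    (∀ n, d n ∣ a n) ∧ (∀ n, d n ∣ b n) ∧ ∀ n, a n * u n + b n * v n = d n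

theorem hasQuasiPolyBezout_eval_of_mul_add_mul_eq_C {P Q A B : ℤ[X]} {N : ℤ} (hN : N ≠ 0)
    (h : P * A + Q * B = C N) :
    HasQuasiPolyBezout (fun n => P.eval (n : ℤ)) (fun n => Q.eval (n : ℤ)) := by
  set T := N.natAbs
  have hT : 0 < T := Int.natAbs_pos.2 hN
  have hPQ : ∀ x : ℤ, P.eval x * A.eval x + Q.eval x * B.eval x = N := fun x => by
    simpa using congrArg (eval x) h
  have hmod : ∀ (R : ℤ[X]) (n : ℕ), N ∣ R.eval (n : ℤ) - R.eval ((n % T : ℕ) : ℤ) := by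
    intro R n
    refine dvd_trans ?_ (sub_dvd_eval_sub _ _ R)
    have hn : (n : ℤ) - ((n % T : ℕ) : ℤ) = (T : ℤ) * ((n / T : ℕ) : ℤ) := by
      rw [sub_eq_iff_eq_add', ← Nat.cast_mul, ← Nat.cast_add, Nat.mod_add_div]
    rw [hn]
    exact (Int.dvd_natAbs.2 dvd_rfl).mul_right _
  let c : ℕ → ℤ := fun i => Int.gcd (P.eval (i : ℤ)) (Q.eval (i : ℤ))
  let α : ℕ → ℤ := fun i => Int.gcdA (P.eval (i : ℤ)) (Q.eval (i : ℤ))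
  let β : ℕ → ℤ := fun i => Int.gcdB (P.eval (i : ℤ)) (Q.eval (i : ℤ))
  have hc_dvd : ∀ R : ℤ[X], (∀ x, (Int.gcd (P.eval x) (Q.eval x) : ℤ) ∣ R.eval x) →
      ∀ n : ℕ, c (n % T) ∣ R.eval (n : ℤ) := by
    intro R hR n
    have hcN : c (n % T) ∣ N := hPQ _ ▸ dvd_add ((Int.gcd_dvd_left _ _).mul_right _)
      ((Int.gcd_dvd_right _ _).mul_right _)
    simpa using dvd_add (hcN.trans (hmod R n)) (hR _)
  -- Bézout coefficients at `n % T` are correct at `n` only modulo `N`.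
  have hN_dvd : ∀ n : ℕ,
      N ∣ c (n % T) - (P.eval (n : ℤ) * α (n % T) + Q.eval (n : ℤ) * β (n % T)) := by
    intro n
    have h := dvd_add ((hmod P n).mul_right (α (n % T))) ((hmod Q n).mul_right (β (n % T)))
    rw [← dvd_neg]
    convert h using 1
    simp only [c, α, β, Int.gcd_eq_gcd_ab]
    ring
  let e : ℕ → ℤ := fun n =>
    (c (n % T) - (P.eval (n : ℤ) * α (n % T) + Q.eval (n : ℤ) * β (n % T))) / N
  have hc := isQuasiPoly_mod hT c
  have hα := isQuasiPoly_mod hT α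
  have hβ := isQuasiPoly_mod hT β
  have he : IsQuasiPoly e :=
    (hc.sub (((isQuasiPoly_eval P).mul hα).add ((isQuasiPoly_eval Q).mul hβ))).ediv N
  refine ⟨fun n => c (n % T), fun n => α (n % T) + e n * A.eval (n : ℤ),
    fun n => β (n % T) + e n * B.eval (n : ℤ), hc, hα.add (he.mul (isQuasiPoly_eval A)),
    hβ.add (he.mul (isQuasiPoly_eval B)), hc_dvd P fun _ => Int.gcd_dvd_left _ _,
    hc_dvd Q fun _ => Int.gcd_dvd_right _ _, fun n => ?_⟩
  linear_combination e n * hPQ n + Int.mul_ediv_cancel' (hN_dvd n)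

theorem HasQuasiPolyBezout.of_mul_eq_mul {a b a' b' g : ℕ → ℤ} {D : ℤ} (hD : D ≠ 0)
    (ha : IsQuasiPoly a) (hb : IsQuasiPoly b) (ha' : ∀ n, D * a n = g n * a' n)
    (hb' : ∀ n, D * b n = g n * b' n) (h : HasQuasiPolyBezout a' b') :
    HasQuasiPolyBezout a b := by
  obtain ⟨c, u, v, -, hu, hv, hca, hcb, hbez⟩ := h
  have hd : ∀ n, D * (a n * u n + b n * v n) = g n * c n := fun n => by
    rw [← hbez]
    linear_combination u n * ha' n + v n * hb' n
  have hdvd : ∀ n x x', D * x = g n * x' → c n ∣ x' → a n * u n + b n * v n ∣ x := by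
    rintro n x _ hx ⟨t, rfl⟩
    exact ⟨t, mul_left_cancel₀ hD (by linear_combination hx - t * hd n)⟩
  exact ⟨_, u, v, (ha.mul hu).add (hb.mul hv), hu, hv, fun n => hdvd n _ _ (ha' n) (hca n),
    fun n => hdvd n _ _ (hb' n) (hcb n), fun _ => rfl⟩

theorem Polynomial.exists_common_denominator (s : Finset ℚ[X]) :
    ∃ D : ℤ, D ≠ 0 ∧ ∀ p ∈ s, ∃ P : ℤ[X], P.map (Int.castRingHom ℚ) = C (D : ℚ) * p := by
  set D : ℕ := ∏ p ∈ s, ∏ n ∈ p.support, (p.coeff n).den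
  refine ⟨D, Nat.cast_ne_zero.2 (Finset.prod_ne_zero_iff.2 fun p _ =>
    Finset.prod_ne_zero_iff.2 fun n _ => (p.coeff n).den_ne_zero), fun p hp => ?_⟩
  refine (mem_lifts _).1 ((lifts_iff_coeff_lifts _).2 fun n => ?_)
  rw [coeff_C_mul]
  by_cases hn : n ∈ p.support
  · obtain ⟨k, hk⟩ : (p.coeff n).den ∣ D :=
      (Finset.dvd_prod_of_mem (fun n => (p.coeff n).den) hn).trans
        (Finset.dvd_prod_of_mem (fun p : ℚ[X] => ∏ n ∈ p.support, (p.coeff n).den) hp)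
    refine ⟨k * (p.coeff n).num, ?_⟩
    simp only [eq_intCast, Int.cast_mul, Int.cast_natCast, hk, Nat.cast_mul, ← Rat.den_mul_eq_num]
    ring
  · rw [notMem_support_iff.1 hn, mul_zero]
    exact ⟨0, map_zero _⟩

theorem Polynomial.exists_scaled_gcd_decomposition (P Q : ℤ[X]) (hQ : Q ≠ 0) :
    ∃ (G P₁ Q₁ A B : ℤ[X]) (D : ℤ), D ≠ 0 ∧ C D * P = G * P₁ ∧ C D * Q = G * Q₁ ∧
      P₁ * A + Q₁ * B = C D := by
  classical
  have hφ : Function.Injective (map (Int.castRingHom ℚ)) := map_injective _ Int.cast_injective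
  set P' := P.map (Int.castRingHom ℚ)
  set Q' := Q.map (Int.castRingHom ℚ)
  have hQ' : Q' ≠ 0 := (Polynomial.map_ne_zero_iff Int.cast_injective).2 hQ
  set g := gcd P' Q'
  have hg : g ≠ 0 := gcd_ne_zero_of_right hQ'
  obtain ⟨a, b, hab⟩ := isCoprime_div_gcd_div_gcd (p := P') hQ'
  obtain ⟨D, hD, hlift⟩ := exists_common_denominator {g, P' / g, Q' / g, a, b}
  obtain ⟨G, hG⟩ := hlift g (by simp)
  obtain ⟨P₁, hP₁⟩ := hlift (P' / g) (by simp)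
  obtain ⟨Q₁, hQ₁⟩ := hlift (Q' / g) (by simp)
  obtain ⟨A, hA⟩ := hlift a (by simp)
  obtain ⟨B, hB⟩ := hlift b (by simp)
  have hPg := EuclideanDomain.mul_div_cancel' hg (gcd_dvd_left P' Q')
  have hQg := EuclideanDomain.mul_div_cancel' hg (gcd_dvd_right P' Q')
  refine ⟨G, P₁, Q₁, A, B, D ^ 2, pow_ne_zero 2 hD, hφ ?_, hφ ?_, hφ ?_⟩ <;>
    simp only [Polynomial.map_mul, Polynomial.map_add, Polynomial.map_pow, Polynomial.map_C, hG,
      hP₁, hQ₁, hA, hB, C_pow, Int.coe_castRingHom]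
  · linear_combination C (D : ℚ) ^ 2 * hPg.symm
  · linear_combination C (D : ℚ) ^ 2 * hQg.symm
  · linear_combination C (D : ℚ) ^ 2 * hab

theorem hasQuasiPolyBezout_eval (P Q : ℤ[X]) :
    HasQuasiPolyBezout (fun n => P.eval (n : ℤ)) (fun n => Q.eval (n : ℤ)) := by
  rcases eq_or_ne Q 0 with rfl | hQ
  · exact ⟨_, _, _, isQuasiPoly_eval P, isQuasiPoly_const 1, isQuasiPoly_const 0,
      fun _ => dvd_rfl, fun _ => by simp, fun _ => by simp⟩
  obtain ⟨G, P₁, Q₁, A, B, D, hD, hP, hQ, hAB⟩ := exists_scaled_gcd_decomposition P Q hQ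
  refine (hasQuasiPolyBezout_eval_of_mul_add_mul_eq_C hD hAB).of_mul_eq_mul hD
    (isQuasiPoly_eval P) (isQuasiPoly_eval Q) (g := fun n => G.eval (n : ℤ)) (fun n => ?_)
    (fun n => ?_)
  · simpa using congrArg (eval (n : ℤ)) hP
  · simpa using congrArg (eval (n : ℤ)) hQ

theorem HasQuasiPolyBezout.of_residues {a b : ℕ → ℤ} {T : ℕ} (hT : 0 < T)
    (h : ∀ i < T, HasQuasiPolyBezout (fun m => a (T * m + i)) (fun m => b (T * m + i))) :
    HasQuasiPolyBezout a b := by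
  choose! d u v hd hu hv hda hdb hbez using h
  have hres : ∀ n, T * (n / T) + n % T = n := fun n => Nat.div_add_mod n T
  refine ⟨fun n => d (n % T) (n / T), fun n => u (n % T) (n / T), fun n => v (n % T) (n / T),
    isQuasiPoly_glue hT hd, isQuasiPoly_glue hT hu, isQuasiPoly_glue hT hv, fun n => ?_,
    fun n => ?_, fun n => ?_⟩
  · simpa only [hres] using hda _ (Nat.mod_lt n hT) (n / T)
  · simpa only [hres] using hdb _ (Nat.mod_lt n hT) (n / T)
  · simpa only [hres] using hbez _ (Nat.mod_lt n hT) (n / T)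

theorem IsQuasiPoly.hasQuasiPolyBezout {a b : ℕ → ℤ} (ha : IsQuasiPoly a) (hb : IsQuasiPoly b) :
    HasQuasiPolyBezout a b := by
  obtain ⟨T, hT, ⟨p, hp⟩, ⟨q, hq⟩⟩ := ha.exists_common_period hb
  refine .of_residues hT fun i hi => ?_
  have hpi : (fun m => a (T * m + i)) = fun m : ℕ => (p i).eval (m : ℤ) := funext fun m => hp m i hi
  have hqi : (fun m => b (T * m + i)) = fun m : ℕ => (q i).eval (m : ℤ) := funext fun m => hq m i hi
  rw [hpi, hqi]
  exact hasQuasiPolyBezout_eval (p i) (q i)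

theorem exists_quasiPoly_bezout : ∀ (s : ℕ) (f : Fin s → ℕ → ℤ), (∀ k, IsQuasiPoly (f k)) →
    ∃ (d : ℕ → ℤ) (u : Fin s → ℕ → ℤ), IsQuasiPoly d ∧ (∀ k, IsQuasiPoly (u k)) ∧
      (∀ k n, d n ∣ f k n) ∧ ∀ n, ∑ k, f k n * u k n = d n
  | 0, _, _ => ⟨_, fun _ _ => 0, isQuasiPoly_const 0, fun k => k.elim0, fun k => k.elim0,
      fun _ => by simp⟩
  | s + 1, f, hf => by
    obtain ⟨d', u', hd', hu', hd'f, hsum'⟩ :=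
      exists_quasiPoly_bezout s (fun k => f k.succ) fun k => hf k.succ
    obtain ⟨d, w, w', hd, hw, hw', hdf, hdd', hbez⟩ := (hf 0).hasQuasiPolyBezout hd'
    refine ⟨d, Fin.cons w fun k n => u' k n * w' n, hd,
      Fin.forall_fin_succ.2 ⟨hw, fun k => (hu' k).mul hw'⟩,
      Fin.forall_fin_succ.2 ⟨hdf, fun k n => (hdd' n).trans (hd'f k n)⟩, fun n => ?_⟩
    rw [Fin.sum_univ_succ, ← hbez, ← hsum', Finset.sum_mul]
    simp only [Fin.cons_zero, Fin.cons_succ, mul_assoc]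

/-- Generalized Bézout/GCD theorem in the ring `R` of integer-valued quasi-polynomials:
for quasi-polynomials `f₁, …, f_s` there exist quasi-polynomials `d, u₁, …, u_s` such
that `d` is a greatest common divisor of the `f_k` (i.e. `d(n) ∣ f_k(n)` pointwise, and
every common pointwise divisor in `R` divides `d` pointwise), and
`f₁u₁ + ⋯ + f_s u_s = d`. -/
theorem generalized_gcd_bezout (s : ℕ) (f : Fin s → (ℕ → ℤ))
    (hf : ∀ k, IsQuasiPoly (f k)) :
    ∃ (d : ℕ → ℤ) (u : Fin s → (ℕ → ℤ)),
      IsQuasiPoly d ∧ (∀ k, IsQuasiPoly (u k)) ∧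
      (∀ k, ∀ n : ℕ, d n ∣ f k n) ∧
      (∀ p : ℕ → ℤ, IsQuasiPoly p → (∀ k, ∀ n : ℕ, p n ∣ f k n) → ∀ n : ℕ, p n ∣ d n) ∧
      (∀ n : ℕ, ∑ k, f k n * u k n = d n) := by
  obtain ⟨d, u, hd, hu, hdf, hsum⟩ := exists_quasiPoly_bezout s f hf
  refine ⟨d, u, hd, hu, hdf, fun p _ hpf n => ?_, hsum⟩
  rw [← hsum n]
  exact Finset.dvd_sum fun k _ => (hpf k n).mul_right _
end

section
/- Let a_1, ..., a_s be pairwise coprime positive integers each ≥ 2 and n ∈ ℕ. Then the Fourier–Dedekind sum satisfies s_{−n}(a_1,...,a_{s−1}; a_s) = B' − B − Σ_{i=1}^{s−1} s_{−(n − a_s({[n/a_s]/a_i}·a_i + 1))}(a_1,...,a_{i−1},a_{i+1},...,a_s; a_i), where B is the polynomial part of p_{(a_1,...,a_s)}(n), and B' = Σ_{t=0}^{[n/a_s]} (polynomial part of p_{(a_1,...,a_{s−1})}(n − a_s t)); moreover B' − B is a quasi-polynomial in n. -/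
/-!
Splitting off the last coordinate, `p_A(n) = ∑_{t ≤ ⌊n/a_s⌋} p_{A'}(n - a_s t)` with
`A' = (a_1, …, a_{s-1})`. Substituting both partial-fraction decompositions, it remains to sum the
Fourier–Dedekind sums `s'` of `A'` over `t`. For `i < s` and `1 ≤ k < a_i`, coprimality gives
`ξ^{k a_s} ≠ 1`, and multiplying numerator and denominator by `1 - ξ^{k a_s}` shows
`s'_m = S_m - S_{m + a_s}`, where `S` is the sum of `A` with modulus `a_i`. The sum over `t`
telescopes, and since `S` has period `a_i` its endpoint only depends on `⌊n/a_s⌋ mod a_i`.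

On a residue class `n = a_s m + r`, the polynomial parts `∑_{t ≤ m} Bp(n - a_s t)` form a sum of
a polynomial in `t` over `t ≤ m`, hence a polynomial in `m` by Faulhaber's formula.
-/

open Complex

/-- The Fourier–Dedekind sum
`s_n(a_1,…,\hat{a_i},…,a_s; a_i) = (1/a_i) Σ_{k=1}^{a_i−1} ξ^{kn} / Π_{j≠i}(1 − ξ^{k a_j})`
with `ξ = exp(2πi/a_i)`; the paper's `s_{−n}(…; a_i)` is `fourierDedekind s a i (−n)`. -/
noncomputable def fourierDedekind (s : ℕ) (a : Fin s → ℕ) (i : Fin s) (n : ℤ) : ℂ :=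
  (1 / (a i : ℂ)) * ∑ k ∈ Finset.Ico 1 (a i),
    Complex.exp (2 * Real.pi * Complex.I / (a i : ℂ)) ^ ((k : ℤ) * n) /
      ∏ j ∈ Finset.univ.erase i,
        (1 - Complex.exp (2 * Real.pi * Complex.I / (a i : ℂ)) ^ (k * a j))

/-- A function `ℕ → ℂ` is a quasi-polynomial if on each residue class modulo some
positive period it is given by a polynomial. -/
def IsQuasiPolyC (f : ℕ → ℂ) : Prop :=
  ∃ T : ℕ, 0 < T ∧ ∃ p : ℕ → Polynomial ℂ,
    ∀ m i : ℕ, i < T → f (T * m + i) = (p i).eval (m : ℂ)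

open Finset Polynomial

theorem Polynomial.exists_eval_natCast_eq_sum_range {K : Type*} [Field K] [CharZero K]
    (Q : K[X]) : ∃ P : K[X], ∀ n : ℕ, P.eval (n : K) = ∑ j ∈ range n, Q.eval (j : K) := by
  induction Q using Polynomial.induction_on' with
  | add Q₁ Q₂ h₁ h₂ =>
    obtain ⟨P₁, hP₁⟩ := h₁
    obtain ⟨P₂, hP₂⟩ := h₂
    exact ⟨P₁ + P₂, fun n => by simp [hP₁, hP₂, sum_add_distrib]⟩
  | monomial p c =>
    refine ⟨C (c / (p + 1)) * ((bernoulli (p + 1)).map (Rat.castHom K) -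
      C ((_root_.bernoulli (p + 1) : ℚ) : K)), fun n => ?_⟩
    have hp : (p + 1 : K) ≠ 0 := by exact_mod_cast p.succ_ne_zero
    have faulhaber := congrArg (fun q : ℚ => (q : K)) (bernoulli_succ_eval n p)
    push_cast at faulhaber
    simp only [eval_mul, eval_C, eval_sub, eval_natCast_map, Rat.coe_castHom, faulhaber,
      eval_monomial, ← mul_sum]
    field_simp
    ring

theorem Fin.prod_erase_castSucc {M : Type*} [CommMonoid M] {n : ℕ} (f : Fin (n + 1) → M)
    (i : Fin n) :
    ∏ j ∈ univ.erase i.castSucc, f j = (∏ j ∈ univ.erase i, f j.castSucc) * f (Fin.last n) := by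
  have hupdate : ∀ {m : ℕ} (g : Fin m → M) (k : Fin m),
      ∏ j ∈ univ.erase k, g j = ∏ j, Function.update g k 1 j := by
    intro m g k
    rw [prod_update_of_mem (mem_univ k), one_mul, sdiff_singleton_eq_erase]
  rw [hupdate, hupdate, Fin.prod_univ_castSucc]
  simp [Function.update_apply, (Fin.castSucc_lt_last i).ne']

theorem fourierDedekind_periodic (s : ℕ) (a : Fin s → ℕ) (i : Fin s) :
    Function.Periodic (fourierDedekind s a i) (a i) := by
  intro m
  unfold fourierDedekind
  congr 1
  refine sum_congr rfl fun k hk => ?_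
  have hζ := Complex.isPrimitiveRoot_exp (a i) (by grind)
  rw [show (k : ℤ) * (m + a i) = k * m + ((a i * k : ℕ) : ℤ) by push_cast; ring,
    zpow_add₀ (Complex.exp_ne_zero _), zpow_natCast, pow_mul, hζ.pow_eq_one, one_pow,
    mul_one]

theorem fourierDedekind_init_eq_sub {s : ℕ} (a : Fin (s + 1) → ℕ) (i : Fin s)
    (hcop : (a i.castSucc).Coprime (a (Fin.last s))) (m : ℤ) :
    fourierDedekind s (fun j => a j.castSucc) i m =
      fourierDedekind (s + 1) a i.castSucc m -
        fourierDedekind (s + 1) a i.castSucc (m + a (Fin.last s)) := by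
  unfold fourierDedekind
  dsimp only
  rw [← mul_sub, ← sum_sub_distrib]
  congr 1
  refine sum_congr rfl fun k hk => ?_
  obtain ⟨hk₁, hkc⟩ := mem_Ico.1 hk
  set c := a i.castSucc
  set ζ := Complex.exp (2 * Real.pi * Complex.I / (c : ℂ))
  have hζ : IsPrimitiveRoot ζ c := Complex.isPrimitiveRoot_exp c (by omega)
  have hz : 1 - ζ ^ (k * a (Fin.last s)) ≠ 0 := by
    rw [sub_ne_zero, ne_comm, Ne, hζ.pow_eq_one_iff_dvd]
    exact fun hdvd => absurd (Nat.le_of_dvd hk₁ (hcop.dvd_of_dvd_mul_right hdvd)) (by omega)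
  rw [Fin.prod_erase_castSucc (fun j => 1 - ζ ^ (k * a j)),
    show (k : ℤ) * (m + a (Fin.last s)) = k * m + ((k * a (Fin.last s) : ℕ) : ℤ) by
      push_cast; ring,
    zpow_add₀ (Complex.exp_ne_zero _), zpow_natCast, ← sub_div, ← mul_one_sub,
    mul_div_mul_right _ _ hz]

theorem sum_range_fourierDedekind_init {s : ℕ} (a : Fin (s + 1) → ℕ) (i : Fin s)
    (hcop : (a i.castSucc).Coprime (a (Fin.last s))) (m : ℤ) (N : ℕ) :
    ∑ t ∈ range N, fourierDedekind s (fun j => a j.castSucc) i (m + a (Fin.last s) * t) =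
      fourierDedekind (s + 1) a i.castSucc m -
        fourierDedekind (s + 1) a i.castSucc (m + a (Fin.last s) * N) := by
  set f : ℕ → ℂ := fun t => fourierDedekind (s + 1) a i.castSucc (m + a (Fin.last s) * t)
  calc _ = ∑ t ∈ range N, (f t - f (t + 1)) := by
        refine sum_congr rfl fun t _ => ?_
        rw [fourierDedekind_init_eq_sub a i hcop]
        simp only [f]
        push_cast
        congr 2
        ring
    _ = f 0 - f N := sum_range_sub' f N
    _ = _ := by simp [f]

theorem sum_range_div_fourierDedekind_init {s : ℕ} (a : Fin (s + 1) → ℕ) (i : Fin s)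
    (hcop : (a i.castSucc).Coprime (a (Fin.last s))) (n : ℕ) :
    ∑ t ∈ range (n / a (Fin.last s) + 1),
        fourierDedekind s (fun j => a j.castSucc) i (-(n : ℤ) + a (Fin.last s) * t) =
      fourierDedekind (s + 1) a i.castSucc (-(n : ℤ)) -
        fourierDedekind (s + 1) a i.castSucc
          (-((n : ℤ) - a (Fin.last s) * (((n / a (Fin.last s)) % a i.castSucc : ℕ) + 1))) := by
  rw [sum_range_fourierDedekind_init a i hcop]
  congr 1
  have hdiv := congrArg (Nat.cast : ℕ → ℤ) (Nat.div_add_mod (n / a (Fin.last s)) (a i.castSucc))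
  refine (congrArg _ ?_).trans ((fourierDedekind_periodic (s + 1) a i.castSucc).int_mul
    (a (Fin.last s) * (n / a (Fin.last s) / a i.castSucc : ℕ)) _)
  simp only [Nat.cast_add, Nat.cast_mul, Nat.cast_one, Int.cast_id] at hdiv ⊢
  linear_combination -(a (Fin.last s) : ℤ) * hdiv

theorem finite_solutions {s : ℕ} (b : Fin s → ℕ) (hb : ∀ i, 0 < b i) (q : ℕ) :
    Finite {x : Fin s → ℕ // ∑ i, x i * b i = q} := by
  have hle (x : {x : Fin s → ℕ // ∑ i, x i * b i = q}) (i : Fin s) : x.1 i < q + 1 :=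
    calc x.1 i ≤ x.1 i * b i := Nat.le_mul_of_pos_right _ (hb i)
      _ ≤ ∑ j, x.1 j * b j :=
        single_le_sum (f := fun j => x.1 j * b j) (fun j _ => Nat.zero_le _) (mem_univ i)
      _ < q + 1 := by rw [x.2]; exact q.lt_succ_self
  refine Finite.of_injective (fun x i => (⟨x.1 i, hle x i⟩ : Fin (q + 1))) fun x y hxy => ?_
  exact Subtype.ext (funext fun i => congrArg Fin.val (congrFun hxy i))

theorem mul_le_of_mem_range_div_succ {n d t : ℕ} (ht : t ∈ range (n / d + 1)) : d * t ≤ n :=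
  (Nat.mul_le_mul_left d (Nat.lt_succ_iff.1 (mem_range.1 ht))).trans (Nat.mul_div_le n d)

def solutionsSnocEquiv {s : ℕ} (a : Fin (s + 1) → ℕ) (ha : 0 < a (Fin.last s)) (n : ℕ) :
    {x : Fin (s + 1) → ℕ // ∑ i, x i * a i = n} ≃
      Σ t : Fin (n / a (Fin.last s) + 1),
        {y : Fin s → ℕ // ∑ i, y i * a i.castSucc = n - a (Fin.last s) * t} where
  toFun x :=
    have hx := x.2
    have hlast : x.1 (Fin.last s) * a (Fin.last s) ≤ n := by
      rw [Fin.sum_univ_castSucc] at hx; omega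
    ⟨⟨x.1 (Fin.last s), Nat.lt_succ_of_le ((Nat.le_div_iff_mul_le ha).2 hlast)⟩,
      ⟨Fin.init x.1, by
        rw [Fin.sum_univ_castSucc] at hx
        rw [mul_comm]
        exact Nat.eq_sub_of_add_eq hx⟩⟩
  invFun p := ⟨Fin.snoc p.2.1 p.1, by
    have hle := mul_le_of_mem_range_div_succ (mem_range.2 p.1.2)
    rw [Fin.sum_univ_castSucc]
    simp only [Fin.snoc_castSucc, Fin.snoc_last, p.2.2]
    rw [mul_comm _ (a (Fin.last s)), Nat.sub_add_cancel hle]⟩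
  left_inv x := Subtype.ext (Fin.snoc_init_self x.1)
  right_inv := by
    rintro ⟨t, y⟩
    refine Sigma.subtype_ext ?_ ?_
    · simp
    · simp [Fin.init_snoc]

theorem card_solutions_eq_sum_range {s : ℕ} (a : Fin (s + 1) → ℕ) (ha : ∀ i, 0 < a i) (n : ℕ) :
    Nat.card {x : Fin (s + 1) → ℕ // ∑ i, x i * a i = n} =
      ∑ t ∈ range (n / a (Fin.last s) + 1),
        Nat.card {y : Fin s → ℕ // ∑ i, y i * a i.castSucc = n - a (Fin.last s) * t} := by
  have := fun q => finite_solutions (fun i => a i.castSucc) (fun i => ha _) q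
  rw [Nat.card_congr (solutionsSnocEquiv a (ha _) n), Nat.card_sigma,
    Fin.sum_univ_eq_sum_range (fun t =>
      Nat.card {y : Fin s → ℕ // ∑ i, y i * a i.castSucc = n - a (Fin.last s) * t})]

theorem isQuasiPolyC_sum_range_div_sub (P Q : ℂ[X]) {d : ℕ} (hd : 0 < d) :
    IsQuasiPolyC (fun n : ℕ =>
      (∑ t ∈ range (n / d + 1), P.eval ((n : ℂ) - d * t)) - Q.eval (n : ℂ)) := by
  choose F hF using fun r : ℕ =>
    exists_eval_natCast_eq_sum_range (P.comp (C (r : ℂ) + C (d : ℂ) * X))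
  refine ⟨d, hd, fun r => (F r).comp (X + 1) - Q.comp (C (r : ℂ) + C (d : ℂ) * X),
    fun m r hr => ?_⟩
  have hdiv : (d * m + r) / d = m := by rw [Nat.mul_add_div hd, Nat.div_eq_of_lt hr, add_zero]
  have hreflect : ∑ t ∈ range (m + 1), P.eval (((d * m + r : ℕ) : ℂ) - d * t) =
      ∑ j ∈ range (m + 1), P.eval ((r : ℂ) + d * j) := by
    rw [← sum_range_reflect]
    refine sum_congr rfl fun j hj => ?_
    rw [Nat.add_sub_cancel, Nat.cast_sub (Nat.lt_succ_iff.1 (mem_range.1 hj))]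
    push_cast
    congr 1
    ring
  simp only [hdiv, hreflect, eval_sub, eval_comp, eval_add, eval_mul, eval_C, eval_X, eval_one,
    ← Nat.cast_add_one, hF]
  push_cast
  rw [add_comm ((d : ℂ) * m)]

/-- Lemma 3.2 of the paper.  Let `a₁, …, a_{s+1}` be pairwise coprime integers `≥ 2`
(the last one playing the role of `a_s`), let `B` be the polynomial part of
`p_{(a₁,…,a_{s+1})}` and `Bp` the polynomial part of `p_{(a₁,…,a_s)}` (characterized by
the partial-fraction formulas below).  Then for every `n`,
`s_{−n}(a₁,…,a_s; a_{s+1}) = B'(n) − B(n) − Σ_{i=1}^{s} s_{−(n − a_{s+1}((⌊n/a_{s+1}⌋ mod a_i)+1))}(a₁,…,\hat{a_i},…,a_{s+1}; a_i)`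
where `B'(n) = Σ_{t=0}^{⌊n/a_{s+1}⌋} Bp(n − a_{s+1}t)`; moreover `B' − B` is a
quasi-polynomial in `n`. -/
theorem fourier_dedekind_reciprocity (s : ℕ) (a : Fin (s + 1) → ℕ)
    (ha : ∀ i, 2 ≤ a i) (hcop : ∀ i j, i ≠ j → Nat.Coprime (a i) (a j))
    (B Bp : Polynomial ℂ)
    (hB : ∀ q : ℕ,
      ((Nat.card {x : Fin (s + 1) → ℕ // ∑ i, x i * a i = q} : ℚ) : ℂ) =
        B.eval (q : ℂ) + ∑ i, fourierDedekind (s + 1) a i (-(q : ℤ)))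
    (hBp : ∀ q : ℕ,
      ((Nat.card {x : Fin s → ℕ // ∑ i, x i * a (Fin.castSucc i) = q} : ℚ) : ℂ) =
        Bp.eval (q : ℂ) +
          ∑ i, fourierDedekind s (fun i => a (Fin.castSucc i)) i (-(q : ℤ))) :
    (∀ n : ℕ,
      fourierDedekind (s + 1) a (Fin.last s) (-(n : ℤ)) =
        (∑ t ∈ Finset.range (n / a (Fin.last s) + 1),
            Bp.eval ((n : ℂ) - (a (Fin.last s) : ℂ) * (t : ℂ))) -
          B.eval (n : ℂ) -
          ∑ i : Fin s,
            fourierDedekind (s + 1) a (Fin.castSucc i)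
              (-((n : ℤ) -
                  (a (Fin.last s) : ℤ) *
                    (((n / a (Fin.last s)) % a (Fin.castSucc i) : ℕ) + 1)))) ∧
    IsQuasiPolyC (fun n : ℕ =>
      (∑ t ∈ Finset.range (n / a (Fin.last s) + 1),
          Bp.eval ((n : ℂ) - (a (Fin.last s) : ℂ) * (t : ℂ))) - B.eval (n : ℂ)) := by
  have hpos i : 0 < a i := zero_lt_two.trans_le (ha i)
  refine ⟨fun n => ?_, isQuasiPolyC_sum_range_div_sub Bp B (hpos _)⟩
  have hcount : B.eval (n : ℂ) + ∑ i, fourierDedekind (s + 1) a i (-(n : ℤ)) =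
      ∑ t ∈ range (n / a (Fin.last s) + 1),
        (Bp.eval ((n : ℂ) - a (Fin.last s) * t) +
          ∑ i, fourierDedekind s (fun i => a i.castSucc) i (-(n : ℤ) + a (Fin.last s) * t)) := by
    rw [← hB, card_solutions_eq_sum_range a hpos, Nat.cast_sum, Rat.cast_sum]
    refine sum_congr rfl fun t ht => ?_
    rw [hBp]
    push_cast [mul_le_of_mem_range_div_succ ht, neg_sub', sub_neg_eq_add]
    rfl
  rw [Fin.sum_univ_castSucc, sum_add_distrib, sum_comm] at hcount
  simp only [sum_range_div_fourierDedekind_init a _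
    (hcop _ _ (Fin.castSucc_lt_last _).ne)] at hcount
  rw [sum_sub_distrib] at hcount
  linear_combination hcount
end

section
/- Let A be the 3×5 integer matrix with rows (1,0,0,1,1), (0,1,0,1,0), (0,0,1,0,1). For all integers a, b, c with b ≥ a ≥ c ≥ 0, the number of x ∈ ℤ_{≥0}^5 with Ax = (a,b,c)ᵀ equals ac − c²/2 + c/2 + a + 1. -/
/-- For the matrix `A` with rows `(1,0,0,1,1), (0,1,0,1,0), (0,0,1,0,1)` and integers
`b ≥ a ≥ c ≥ 0`, the number of `x ∈ ℤ_{≥0}^5` with `Ax = (a,b,c)ᵀ` (i.e.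
`x₁+x₄+x₅ = a`, `x₂+x₄ = b`, `x₃+x₅ = c`) equals `ac − c²/2 + c/2 + a + 1`. -/
theorem chamber_formula (a b c : ℕ) (hca : c ≤ a) (hab : a ≤ b) :
    (Nat.card {x : Fin 5 → ℕ //
        x 0 + x 3 + x 4 = a ∧ x 1 + x 3 = b ∧ x 2 + x 4 = c} : ℚ) =
      (a : ℚ) * c - (c : ℚ) ^ 2 / 2 + (c : ℚ) / 2 + (a : ℚ) + 1 := by
  have key : Nat.card {x : Fin 5 → ℕ //
        x 0 + x 3 + x 4 = a ∧ x 1 + x 3 = b ∧ x 2 + x 4 = c}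
      = Nat.card (Σ v : Fin (c + 1), Fin (a + 1 - v)) := by
    apply Nat.card_congr
    refine
      { toFun := fun x => ⟨⟨x.1 4, by omega⟩, ⟨x.1 3, show x.1 3 < a + 1 - x.1 4 by
          have := x.2.1; have := x.2.2.2; omega⟩⟩
        invFun := fun p => ⟨![a - p.2.1 - p.1.1, b - p.2.1, c - p.1.1, p.2.1, p.1.1], by
          have h1 : (p.1 : ℕ) < c + 1 := p.1.2
          have h2 : (p.2 : ℕ) < a + 1 - p.1 := p.2.2
          refine ⟨?_, ?_, ?_⟩ <;> simp <;> omega⟩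
        left_inv := ?_
        right_inv := ?_ }
    · rintro ⟨x, hx1, hx2, hx3⟩
      ext i
      fin_cases i <;> simp <;> omega
    · rintro ⟨v, u⟩
      have h1 : (v : ℕ) < c + 1 := v.2
      have h2 : (u : ℕ) < a + 1 - v := u.2
      simp only [Fin.mk.injEq]
      constructor <;> · apply Fin.ext; simp
  rw [key, Nat.card_eq_fintype_card, Fintype.card_sigma]
  clear key
  simp only [Fintype.card_fin]
  rw [Fin.sum_univ_eq_sum_range (fun v => a + 1 - v)]
  have hterm : ∀ v ∈ Finset.range (c + 1), ((a + 1 - v : ℕ) : ℚ) = (a : ℚ) + 1 - v := by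
    intro v hv
    simp only [Finset.mem_range] at hv
    have hv' : v ≤ a + 1 := by omega
    push_cast [Nat.cast_sub hv']
    ring
  push_cast
  rw [Finset.sum_congr rfl hterm, Finset.sum_sub_distrib, Finset.sum_const, Finset.card_range]
  have gauss : ∑ v ∈ Finset.range (c + 1), (v : ℚ) = c * (c + 1) / 2 := by
    have h : (∑ i ∈ Finset.range (c + 1), i) * 2 = (c + 1) * c := by
      simpa using Finset.sum_range_id_mul_two (c + 1)
    have h2 : ((∑ i ∈ Finset.range (c + 1), i : ℕ) : ℚ) * 2 = ((c : ℚ) + 1) * c := by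
      exact_mod_cast congrArg (Nat.cast : ℕ → ℚ) h
    push_cast at h2
    linarith
  rw [gauss]
  ring
end
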